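/- Let μ be a finitely supported symmetric probability measure on a countable group Γ such that the subgroup generated by supp(μ) is non-amenable, and suppose sup_{g∈Γ} μ^{*n}(g) ≤ C e^{−c'n} for all n ≥ 1 with constants C, c' > 0. Let M = max_{g ∈ supp μ} ‖g‖ where Γ ⊂ SL_d(Z) and ‖·‖ is a submultiplicative matrix norm. Then there exist constants C' and c > 0 such that for every integer q ≥ 2 and every n ≥ C' log q, μ^{*n}(Γ_q) ≤ C' q^{−c}, where Γ_q = {g ∈ Γ : g ≡ 1 mod q}. -/

import Mathlib

open scoped Classical

noncomputable def convPow {G : Type*} [Group G] (μ : G → ℝ) : ℕ → G → ℝ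
  | 0 => fun x => if x = 1 then 1 else 0
  | n + 1 => fun x => ∑ᶠ y : G, μ y * convPow μ n (y⁻¹ * x)

section aux
variable {G : Type*} [Group G] {μ : G → ℝ}

lemma convPow_succ (hfin : (Function.support μ).Finite) (n : ℕ) (x : G) :
    convPow μ (n+1) x = ∑ y ∈ hfin.toFinset, μ y * convPow μ n (y⁻¹ * x) := by
  show (∑ᶠ y : G, μ y * convPow μ n (y⁻¹ * x)) = _
  apply finsum_eq_finset_sum_of_support_subset
  intro y hy
  have : μ y ≠ 0 := by
    intro h; apply hy; simp [h]
  simpa using this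

lemma convPow_nonneg (hfin : (Function.support μ).Finite) (hpos : ∀ g, 0 ≤ μ g) :
    ∀ n x, 0 ≤ convPow μ n x := by
  intro n
  induction n with
  | zero => intro x; simp only [convPow]; split <;> norm_num
  | succ n ih =>
    intro x
    rw [convPow_succ hfin]
    exact Finset.sum_nonneg fun y _ => mul_nonneg (hpos y) (ih _)

lemma convPow_exists_list (hfin : (Function.support μ).Finite) :
    ∀ n x, convPow μ n x ≠ 0 →
      ∃ l : List G, l.length = n ∧ (∀ a ∈ l, μ a ≠ 0) ∧ l.prod = x := by
  intro n
  induction n with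
  | zero =>
    intro x hx
    simp only [convPow] at hx
    rcases eq_or_ne x 1 with h | h
    · exact ⟨[], rfl, by simp, by simp [h]⟩
    · simp [h] at hx
  | succ n ih =>
    intro x hx
    rw [convPow_succ hfin] at hx
    obtain ⟨y, -, hy⟩ := Finset.exists_ne_zero_of_sum_ne_zero hx
    have hμ : μ y ≠ 0 := fun h => hy (by simp [h])
    have hc : convPow μ n (y⁻¹ * x) ≠ 0 := fun h => hy (by simp [h])
    obtain ⟨l, hl, hmem, hprod⟩ := ih _ hc
    exact ⟨y :: l, by simp [hl], by
      intro a ha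
      rcases List.mem_cons.1 ha with h | h
      · exact h ▸ hμ
      · exact hmem a h, by simp [hprod]⟩

lemma convPow_support_finite (hfin : (Function.support μ).Finite) (n : ℕ) :
    (Function.support (convPow μ n)).Finite := by
  induction n with
  | zero =>
    apply Set.Finite.subset (Set.finite_singleton (1 : G))
    intro x hx
    simp only [Function.mem_support, convPow] at hx
    by_contra h
    rw [if_neg (by simpa using h)] at hx
    exact hx rfl
  | succ n ih =>
    apply Set.Finite.subset ((hfin.biUnion (fun y _ => (ih.image (fun z => y * z)))))
    intro x hx
    rw [Function.mem_support, convPow_succ hfin] at hx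
    obtain ⟨y, hyS, hy⟩ := Finset.exists_ne_zero_of_sum_ne_zero hx
    have hμ : μ y ≠ 0 := fun h => hy (by simp [h])
    have hc : convPow μ n (y⁻¹ * x) ≠ 0 := fun h => hy (by simp [h])
    exact Set.mem_biUnion hμ ⟨y⁻¹ * x, hc, by simp⟩

lemma convPow_shift_support_finite (hfin : (Function.support μ).Finite) (n : ℕ) (u : G) :
    (Function.support (fun g => convPow μ n (u * g))).Finite := by
  apply Set.Finite.subset (((convPow_support_finite hfin n).image (fun z => u⁻¹ * z)))
  intro x hx
  exact ⟨u * x, hx, by simp⟩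

lemma convPow_total (hfin : (Function.support μ).Finite) (hsum : ∑ᶠ g, μ g = 1) :
    ∀ n, ∑ᶠ x, convPow μ n x = 1 := by
  intro n
  induction n with
  | zero =>
    rw [finsum_eq_single _ (1 : G) (fun x hx => by simp [convPow, hx])]
    simp [convPow]
  | succ n ih =>
    have h1 : ∀ x : G, convPow μ (n+1) x = ∑ y ∈ hfin.toFinset, μ y * convPow μ n (y⁻¹ * x) :=
      convPow_succ hfin n
    rw [finsum_congr h1, finsum_sum_comm _ _ (fun y _ => by
      apply Set.Finite.subset (convPow_shift_support_finite hfin n y⁻¹)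
      intro x hx
      have : convPow μ n (y⁻¹ * x) ≠ 0 := fun h => hx (by simp [h])
      exact this)]
    have h2 : ∀ y ∈ hfin.toFinset, (∑ᶠ x : G, μ y * convPow μ n (y⁻¹ * x)) = μ y := by
      intro y _
      rw [← mul_finsum _ _]
      have : (∑ᶠ x : G, convPow μ n (y⁻¹ * x)) = ∑ᶠ x, convPow μ n x :=
        finsum_comp_equiv (Equiv.mulLeft y⁻¹)
      rw [this, ih, mul_one]
    rw [Finset.sum_congr rfl h2, ← finsum_eq_sum μ hfin, hsum]

lemma finsum_mem_mono {α : Type*} {s t : Set α} {f : α → ℝ} (hst : s ⊆ t)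
    (h0 : ∀ x, 0 ≤ f x) (ht : (t ∩ Function.support f).Finite) :
    ∑ᶠ x ∈ s, f x ≤ ∑ᶠ x ∈ t, f x := by
  have hs : (s ∩ Function.support f).Finite :=
    ht.subset (Set.inter_subset_inter hst subset_rfl)
  rw [finsum_mem_eq_sum f hs, finsum_mem_eq_sum f ht]
  apply Finset.sum_le_sum_of_subset_of_nonneg
  · intro x hx
    rw [Set.Finite.mem_toFinset] at hx ⊢
    exact ⟨hst hx.1, hx.2⟩
  · intro x _ _; exact h0 x

end aux

lemma list_prod_entry_bound (d : ℕ) (Kz : ℤ) (hKz : 0 ≤ Kz) :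
    ∀ (l : List (Matrix (Fin d) (Fin d) ℤ)),
    (∀ A ∈ l, ∀ i j, |A i j| ≤ Kz) →
    ∀ i j, |l.prod i j| ≤ (((d : ℤ)+1) * Kz) ^ l.length := by
  intro l
  induction l with
  | nil =>
    intro _ i j
    simp only [List.prod_nil, List.length_nil, pow_zero, Matrix.one_apply]
    split <;> norm_num
  | cons A t ih =>
    intro h i j
    have hA := h A (List.mem_cons_self)
    have iht := ih (fun B hB => h B (List.mem_cons_of_mem _ hB))
    set B : ℤ := ((d : ℤ)+1) * Kz with hB
    have hB0 : 0 ≤ B := mul_nonneg (by positivity) hKz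
    have hBt : 0 ≤ B ^ t.length := pow_nonneg hB0 _
    rw [List.prod_cons, List.length_cons]
    calc |(A * t.prod) i j| = |∑ k, A i k * t.prod k j| := by rw [Matrix.mul_apply]
      _ ≤ ∑ k, |A i k * t.prod k j| := Finset.abs_sum_le_sum_abs _ _
      _ ≤ ∑ _k : Fin d, Kz * B ^ t.length := by
          apply Finset.sum_le_sum
          intro k _
          rw [abs_mul]
          exact mul_le_mul (hA i k) (iht k j) (abs_nonneg _)
            (le_trans (abs_nonneg _) (hA i k))
      _ = (d : ℤ) * (Kz * B ^ t.length) := by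
          simp [Finset.sum_const, Finset.card_univ]
      _ ≤ B * B ^ t.length := by
          have : (d : ℤ) * Kz ≤ B := by
            have : (d : ℤ) ≤ (d : ℤ) + 1 := by linarith
            exact mul_le_mul_of_nonneg_right this hKz
          calc (d : ℤ) * (Kz * B ^ t.length) = ((d : ℤ) * Kz) * B ^ t.length := by ring
            _ ≤ B * B ^ t.length := mul_le_mul_of_nonneg_right this hBt
      _ = B ^ (t.length + 1) := by rw [pow_succ]; ring

lemma coe_list_prod (d : ℕ) (l : List (Matrix.SpecialLinearGroup (Fin d) ℤ)) :
    ((l.prod : Matrix.SpecialLinearGroup (Fin d) ℤ) : Matrix (Fin d) (Fin d) ℤ)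
      = (l.map (fun g : Matrix.SpecialLinearGroup (Fin d) ℤ =>
        (g : Matrix (Fin d) (Fin d) ℤ))).prod := by
  induction l with
  | nil => simp
  | cons a t ih => simp [ih]

set_option maxHeartbeats 1000000 in
/-- **Almost diophantine property.**  Let `μ` be a finitely supported symmetric probability
measure on `SL_d(ℤ)` satisfying the decay `sup_g μ^(*n)(g) ≤ C e^(-c'n)` for all `n ≥ 1`.
Then there are `C'` and `c > 0` such that for every `q ≥ 2` and every `n ≥ C' log q`,
`μ^(*n)(Γ_q) ≤ C' q^(-c)`, where `Γ_q = {g : g ≡ 1 mod q}`. -/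
theorem almost_diophantine (d : ℕ)
    (μ : Matrix.SpecialLinearGroup (Fin d) ℤ → ℝ)
    (hfin : (Function.support μ).Finite)
    (hpos : ∀ g, 0 ≤ μ g) (hsum : ∑ᶠ g, μ g = 1) (hsymm : ∀ g, μ g⁻¹ = μ g)
    (C c' : ℝ) (hC : 0 < C) (hc' : 0 < c')
    (hdecay : ∀ n : ℕ, 1 ≤ n → ∀ g, convPow μ n g ≤ C * Real.exp (-c' * n)) :
    ∃ C' c : ℝ, 0 < C' ∧ 0 < c ∧ ∀ q : ℕ, 2 ≤ q → ∀ n : ℕ,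
      C' * Real.log q ≤ (n : ℝ) →
      (∑ᶠ g ∈ {g : Matrix.SpecialLinearGroup (Fin d) ℤ |
          ∀ i j, (q : ℤ) ∣ ((g : Matrix (Fin d) (Fin d) ℤ) i j
            - (1 : Matrix (Fin d) (Fin d) ℤ) i j)}, convPow μ n g)
        ≤ C' * (q : ℝ) ^ (-c) := by
  set S : Finset (Matrix.SpecialLinearGroup (Fin d) ℤ) := hfin.toFinset with hS
  -- the entry bound on the support
  set Kz : ℤ := 1 + ∑ g ∈ S, ∑ i, ∑ j, |(g : Matrix (Fin d) (Fin d) ℤ) i j| with hKz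
  have hKsum0 : (0:ℤ) ≤ ∑ g ∈ S, ∑ i, ∑ j, |(g : Matrix (Fin d) (Fin d) ℤ) i j| :=
    Finset.sum_nonneg fun g _ => Finset.sum_nonneg fun i _ =>
      Finset.sum_nonneg fun j _ => abs_nonneg _
  have hKz1 : (1:ℤ) ≤ Kz := by rw [hKz]; linarith
  have hKz0 : (0:ℤ) ≤ Kz := by linarith
  have hKbound : ∀ g ∈ S, ∀ i j, |(g : Matrix (Fin d) (Fin d) ℤ) i j| ≤ Kz := by
    intro g hg i j
    have h1 : |(g : Matrix (Fin d) (Fin d) ℤ) i j|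
        ≤ ∑ j', |(g : Matrix (Fin d) (Fin d) ℤ) i j'| :=
      Finset.single_le_sum (f := fun j' => |(g : Matrix (Fin d) (Fin d) ℤ) i j'|)
        (fun j' _ => abs_nonneg _) (Finset.mem_univ j)
    have h2 : (∑ j', |(g : Matrix (Fin d) (Fin d) ℤ) i j'|)
        ≤ ∑ i', ∑ j', |(g : Matrix (Fin d) (Fin d) ℤ) i' j'| :=
      Finset.single_le_sum (f := fun i' => ∑ j', |(g : Matrix (Fin d) (Fin d) ℤ) i' j'|)
        (fun i' _ => Finset.sum_nonneg fun j' _ => abs_nonneg _) (Finset.mem_univ i)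
    have h3 : (∑ i', ∑ j', |(g : Matrix (Fin d) (Fin d) ℤ) i' j'|)
        ≤ ∑ g' ∈ S, ∑ i', ∑ j', |(g' : Matrix (Fin d) (Fin d) ℤ) i' j'| :=
      Finset.single_le_sum (f := fun g' : Matrix.SpecialLinearGroup (Fin d) ℤ => ∑ i', ∑ j', |(g' : Matrix (Fin d) (Fin d) ℤ) i' j'|)
        (fun g' _ => Finset.sum_nonneg fun i' _ =>
        Finset.sum_nonneg fun j' _ => abs_nonneg _) hg
    rw [hKz]; linarith
  set Lz : ℤ := ((d : ℤ) + 1) * Kz with hLz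
  have hLz1 : (1:ℤ) ≤ Lz := by
    rw [hLz]
    calc (1:ℤ) = 1 * 1 := by ring
      _ ≤ ((d : ℤ) + 1) * Kz := by
          have hd : (0:ℤ) ≤ (d:ℤ) := Int.natCast_nonneg d
          nlinarith
  have h2L : (1:ℝ) < 2 * (Lz : ℝ) := by
    have : (1:ℝ) ≤ (Lz : ℝ) := by exact_mod_cast hLz1
    linarith
  set lam : ℝ := Real.log (2 * (Lz : ℝ)) with hlam
  have hlam0 : 0 < lam := Real.log_pos h2L
  refine ⟨(C+1) * Real.exp c' + 1/(2*lam) + 1, c' / (2*lam), ?_, ?_, ?_⟩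
  · positivity
  · positivity
  set C' : ℝ := (C+1) * Real.exp c' + 1/(2*lam) + 1 with hC'
  set c : ℝ := c' / (2*lam) with hc
  intro q hq n hn
  set Aq : Set (Matrix.SpecialLinearGroup (Fin d) ℤ) := {g : Matrix.SpecialLinearGroup (Fin d) ℤ | ∀ i j, (q : ℤ) ∣ ((g : Matrix (Fin d) (Fin d) ℤ) i j
      - (1 : Matrix (Fin d) (Fin d) ℤ) i j)} with hAq
  have hq0 : (0:ℝ) < q := by positivity
  have hq2 : (2:ℝ) ≤ q := by exact_mod_cast hq
  have hlogq : 0 ≤ Real.log q := Real.log_nonneg (by linarith)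
  have hrpow : (q:ℝ) ^ (-c) = Real.exp (-(c * Real.log q)) := by
    rw [Real.rpow_def_of_pos hq0]; ring_nf
  have hrpow0 : 0 < (q:ℝ) ^ (-c) := Real.rpow_pos_of_pos hq0 _
  have hexpc' : Real.exp c' ≤ C' := by
    rw [hC']
    have h2lam : 0 < 1/(2*lam) := by positivity
    nlinarith [Real.exp_pos c', mul_pos hC (Real.exp_pos c')]
  -- case split on the size of q
  rcases lt_or_ge (q : ℝ) ((2 * (Lz:ℝ))^2) with hsmall | hbig
  · -- small q : trivial bound by total mass
    have htot : (∑ᶠ g ∈ Aq, convPow μ n g) ≤ 1 := by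
      have := finsum_mem_mono (Set.subset_univ Aq)
        (convPow_nonneg hfin hpos n)
        ((convPow_support_finite hfin n).subset (Set.inter_subset_right))
      rw [finsum_mem_univ, convPow_total hfin hsum n] at this
      exact this
    have h1C : 1 ≤ C' * (q:ℝ) ^ (-c) := by
      have hqle : Real.log q ≤ 2 * lam := by
        have : Real.log q ≤ Real.log ((2 * (Lz:ℝ))^2) :=
          Real.log_le_log hq0 hsmall.le
        rwa [Real.log_pow, Nat.cast_ofNat, ← hlam] at this
      have hcl : c * Real.log q ≤ c' := by
        rw [hc]
        rw [div_mul_eq_mul_div, div_le_iff₀ (by positivity)]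
        nlinarith
      have : Real.exp (c * Real.log q) ≤ C' :=
        le_trans (Real.exp_le_exp.2 hcl) hexpc'
      rw [hrpow, Real.exp_neg, ← div_eq_mul_inv, le_div_iff₀ (Real.exp_pos _), one_mul]
      exact this
    rw [hAq] at htot
    exact le_trans htot h1C
  · -- large q
    obtain ⟨x, hx⟩ : ∃ x : ℝ, x = Real.log q / (2*lam) := ⟨_, rfl⟩
    have hlog2 : 2 * lam ≤ Real.log q := by
      have h0 : Real.log ((2 * (Lz:ℝ))^2) ≤ Real.log q :=
        Real.log_le_log (by positivity) hbig
      rw [Real.log_pow] at h0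
      push_cast at h0
      linarith
    have hx1 : (1:ℝ) ≤ x := by
      rw [hx, le_div_iff₀ (by positivity)]
      linarith
    obtain ⟨m, hmdef⟩ : ∃ m : ℕ, m = ⌊x⌋₊ := ⟨_, rfl⟩
    have hm1 : 1 ≤ m := by
      rw [hmdef]; exact Nat.le_floor (by exact_mod_cast hx1)
    have hmx : (m:ℝ) ≤ x := by
      rw [hmdef]; exact Nat.floor_le (by linarith)
    have hmn : m ≤ n := by
      have hC'lam : 1/(2*lam) ≤ C' := by
        have := Real.exp_pos c'
        rw [hC']
        nlinarith
      have : (m:ℝ) ≤ (n:ℝ) := by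
        calc (m:ℝ) ≤ x := hmx
          _ = (1/(2*lam)) * Real.log q := by rw [hx]; ring
          _ ≤ C' * Real.log q := mul_le_mul_of_nonneg_right hC'lam hlogq
          _ ≤ n := hn
      exact_mod_cast this
    have hq4 : ((Lz:ℝ))^(2*m) ≤ (q:ℝ)/4 := by
      have hLzR : (0:ℝ) < (Lz:ℝ) := by exact_mod_cast lt_of_lt_of_le one_pos hLz1
      have hpow : (2*(Lz:ℝ))^(2*m) ≤ q := by
        have hxlam : 2 * x * lam = Real.log q := by
          rw [hx]
          field_simp
        have hlog : ((2*m : ℕ):ℝ) * lam ≤ Real.log q := by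
          push_cast
          nlinarith
        calc (2*(Lz:ℝ))^(2*m) = Real.exp (Real.log ((2*(Lz:ℝ))^(2*m))) := by
              rw [Real.exp_log (by positivity)]
          _ ≤ Real.exp (Real.log q) := by
              apply Real.exp_le_exp.2
              rw [Real.log_pow]
              exact hlog
          _ = q := Real.exp_log hq0
      have h4 : (4:ℝ) ≤ 2^(2*m) := by
        calc (4:ℝ) = 2^2 := by norm_num
          _ ≤ 2^(2*m) := pow_le_pow_right₀ (by norm_num) (by omega)
      have hmul : (2*(Lz:ℝ))^(2*m) = 2^(2*m) * (Lz:ℝ)^(2*m) := mul_pow 2 _ _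
      have hLpow : (0:ℝ) ≤ (Lz:ℝ)^(2*m) := by positivity
      nlinarith
    have hcoset : ∀ y : Matrix.SpecialLinearGroup (Fin d) ℤ,
        (∑ᶠ g ∈ Aq, convPow μ m (y * g)) ≤ C * Real.exp (-c' * m) := by
      intro y
      have hBpos : (0:ℝ) < C * Real.exp (-c' * m) := by positivity
      have hss : (Aq ∩ Function.support
          (fun g => convPow μ m (y * g))).Subsingleton := by
        rintro g ⟨hgA, hgs⟩ h ⟨hhA, hhs⟩
        rw [Function.mem_support] at hgs hhs
        obtain ⟨l1, hl1len, hl1mem, hl1prod⟩ := convPow_exists_list hfin m (y*g) hgs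
        obtain ⟨l2, hl2len, hl2mem, hl2prod⟩ := convPow_exists_list hfin m (y*h) hhs
        set L : List (Matrix.SpecialLinearGroup (Fin d) ℤ) :=
          (l1.map (fun a => a⁻¹)).reverse ++ l2 with hL
        have hLlen : L.length = m + m := by simp [hL, hl1len, hl2len]
        have hLmem : ∀ a ∈ L, μ a ≠ 0 := by
          intro a ha
          rw [hL, List.mem_append] at ha
          rcases ha with ha | ha
          · rw [List.mem_reverse, List.mem_map] at ha
            obtain ⟨b, hb, rfl⟩ := ha
            rw [hsymm]; exact hl1mem b hb
          · exact hl2mem a ha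
        have hLprod : L.prod = g⁻¹ * h := by
          rw [hL, List.prod_append, ← List.prod_inv_reverse, hl1prod, hl2prod]
          group
        have hw1 : g⁻¹ * h = 1 := by
          have hentry : ∀ i j,
              |((g⁻¹*h : Matrix.SpecialLinearGroup (Fin d) ℤ) :
                Matrix (Fin d) (Fin d) ℤ) i j| ≤ Lz ^ (2*m) := by
            intro i j
            have hb := list_prod_entry_bound d Kz hKz0
              (L.map (fun a : Matrix.SpecialLinearGroup (Fin d) ℤ => (a : Matrix (Fin d) (Fin d) ℤ)))
              (by
                intro A hA
                rw [List.mem_map] at hA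
                obtain ⟨a, haL, rfl⟩ := hA
                exact hKbound a (hfin.mem_toFinset.2 (hLmem a haL)))
              i j
            rw [← coe_list_prod, hLprod] at hb
            calc |((g⁻¹*h : Matrix.SpecialLinearGroup (Fin d) ℤ) :
                Matrix (Fin d) (Fin d) ℤ) i j|
                ≤ (((d:ℤ)+1) * Kz) ^ (L.map
                    (fun a : Matrix.SpecialLinearGroup (Fin d) ℤ => (a : Matrix (Fin d) (Fin d) ℤ))).length := hb
              _ = Lz ^ (2*m) := by
                  rw [List.length_map, hLlen, hLz, two_mul]
          have hdvd : ∀ i j, (q:ℤ) ∣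
              (((g⁻¹*h : Matrix.SpecialLinearGroup (Fin d) ℤ) :
                Matrix (Fin d) (Fin d) ℤ) i j - (1 : Matrix (Fin d) (Fin d) ℤ) i j) := by
            intro i j
            have hkey : ((g⁻¹*h : Matrix.SpecialLinearGroup (Fin d) ℤ) :
                  Matrix (Fin d) (Fin d) ℤ) - 1
                = ((g⁻¹ : Matrix.SpecialLinearGroup (Fin d) ℤ) : Matrix (Fin d) (Fin d) ℤ)
                  * (((h : Matrix (Fin d) (Fin d) ℤ)) - (g : Matrix (Fin d) (Fin d) ℤ)) := by
              rw [Matrix.mul_sub]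
              have e1 : ((g⁻¹ : Matrix.SpecialLinearGroup (Fin d) ℤ) :
                  Matrix (Fin d) (Fin d) ℤ) * (h : Matrix (Fin d) (Fin d) ℤ)
                  = ((g⁻¹*h : Matrix.SpecialLinearGroup (Fin d) ℤ) :
                    Matrix (Fin d) (Fin d) ℤ) := by
                rw [Matrix.SpecialLinearGroup.coe_mul]
              have e2 : ((g⁻¹ : Matrix.SpecialLinearGroup (Fin d) ℤ) :
                  Matrix (Fin d) (Fin d) ℤ) * (g : Matrix (Fin d) (Fin d) ℤ)
                  = 1 := by
                rw [← Matrix.SpecialLinearGroup.coe_mul]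
                simp
              rw [e1, e2]
            have happ : ((g⁻¹*h : Matrix.SpecialLinearGroup (Fin d) ℤ) :
                  Matrix (Fin d) (Fin d) ℤ) i j - (1 : Matrix (Fin d) (Fin d) ℤ) i j
                = ∑ k, ((g⁻¹ : Matrix.SpecialLinearGroup (Fin d) ℤ) :
                    Matrix (Fin d) (Fin d) ℤ) i k
                  * ((h : Matrix (Fin d) (Fin d) ℤ) k j
                    - (g : Matrix (Fin d) (Fin d) ℤ) k j) := by
              have h5 := congrArg (fun M => M i j) hkey
              simp only [Matrix.sub_apply, Matrix.mul_apply] at h5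
              exact h5
            rw [happ]
            apply Finset.dvd_sum
            intro k _
            apply Dvd.dvd.mul_left
            have h1 : (q:ℤ) ∣ ((h : Matrix (Fin d) (Fin d) ℤ) k j
                - (1 : Matrix (Fin d) (Fin d) ℤ) k j) := hhA k j
            have h2 : (q:ℤ) ∣ ((g : Matrix (Fin d) (Fin d) ℤ) k j
                - (1 : Matrix (Fin d) (Fin d) ℤ) k j) := hgA k j
            have h3 := dvd_sub h1 h2
            simpa using h3
          apply Matrix.SpecialLinearGroup.ext
          intro i j
          have hsmallq : (Lz ^ (2*m) + 1 : ℤ) < q := by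
            have h6 : ((Lz ^ (2*m) + 1 : ℤ) : ℝ) < (q:ℝ) := by push_cast; linarith
            exact_mod_cast h6
          have habs : |((g⁻¹*h : Matrix.SpecialLinearGroup (Fin d) ℤ) :
              Matrix (Fin d) (Fin d) ℤ) i j - (1 : Matrix (Fin d) (Fin d) ℤ) i j| < q := by
            have h1 : |(1 : Matrix (Fin d) (Fin d) ℤ) i j| ≤ 1 := by
              rw [Matrix.one_apply]
              split <;> norm_num
            calc |((g⁻¹*h : Matrix.SpecialLinearGroup (Fin d) ℤ) :
                Matrix (Fin d) (Fin d) ℤ) i j - (1 : Matrix (Fin d) (Fin d) ℤ) i j|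
                ≤ |((g⁻¹*h : Matrix.SpecialLinearGroup (Fin d) ℤ) :
                  Matrix (Fin d) (Fin d) ℤ) i j| + |(1 : Matrix (Fin d) (Fin d) ℤ) i j| :=
                  abs_sub _ _
              _ ≤ Lz ^ (2*m) + 1 := add_le_add (hentry i j) h1
              _ < q := hsmallq
          have h7 := Int.eq_zero_of_abs_lt_dvd (hdvd i j) habs
          have h0 : ((g⁻¹*h : Matrix.SpecialLinearGroup (Fin d) ℤ) :
              Matrix (Fin d) (Fin d) ℤ) i j = (1 : Matrix (Fin d) (Fin d) ℤ) i j := by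
            linarith [h7]
          simpa using h0
        exact inv_mul_eq_one.mp hw1
      have hfinsupp : (Aq ∩ Function.support (fun g => convPow μ m (y * g))).Finite :=
        hss.finite
      rw [finsum_mem_eq_sum _ hfinsupp]
      have hcard : hfinsupp.toFinset.card ≤ 1 := by
        rw [Finset.card_le_one]
        intro a ha b hb
        rw [Set.Finite.mem_toFinset] at ha hb
        exact hss ha hb
      calc ∑ g ∈ hfinsupp.toFinset, convPow μ m (y * g)
          ≤ hfinsupp.toFinset.card • (C * Real.exp (-c' * m)) := by
            apply Finset.sum_le_card_nsmul
            intro g _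
            exact hdecay m hm1 (y * g)
        _ ≤ 1 • (C * Real.exp (-c' * m)) := by
            apply nsmul_le_nsmul_left hBpos.le hcard
        _ = C * Real.exp (-c' * m) := one_smul _ _
    have hclaim : ∀ k : ℕ, ∀ y : Matrix.SpecialLinearGroup (Fin d) ℤ,
        (∑ᶠ g ∈ Aq, convPow μ (m + k) (y * g)) ≤ C * Real.exp (-c' * m) := by
      intro k
      induction k with
      | zero => exact hcoset
      | succ k ih =>
        intro y
        have hNfin : (Aq ∩ Function.support
            (fun g => convPow μ (m + (k+1)) (y * g))).Finite :=
          ((convPow_shift_support_finite hfin (m+(k+1)) y).subset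
            Set.inter_subset_right)
        rw [finsum_mem_eq_sum _ hNfin]
        have hterm : ∀ g ∈ hNfin.toFinset,
            convPow μ (m + (k+1)) (y * g)
              = ∑ z ∈ S, μ z * convPow μ (m + k) ((z⁻¹ * y) * g) := by
          intro g _
          have he : m + (k+1) = (m+k) + 1 := rfl
          rw [he, convPow_succ hfin (m+k) (y*g)]
          apply Finset.sum_congr rfl
          intro z _
          rw [mul_assoc]
        rw [Finset.sum_congr rfl hterm, Finset.sum_comm]
        have hinner : ∀ z ∈ S,
            (∑ g ∈ hNfin.toFinset, μ z * convPow μ (m + k) ((z⁻¹ * y) * g))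
              ≤ μ z * (C * Real.exp (-c' * m)) := by
          intro z hz
          rw [← Finset.mul_sum]
          apply mul_le_mul_of_nonneg_left _ (hpos z)
          calc (∑ g ∈ hNfin.toFinset, convPow μ (m + k) ((z⁻¹ * y) * g))
              = ∑ᶠ g ∈ (hNfin.toFinset : Set (Matrix.SpecialLinearGroup (Fin d) ℤ)),
                  convPow μ (m + k) ((z⁻¹ * y) * g) := by
                rw [finsum_mem_coe_finset]
            _ ≤ ∑ᶠ g ∈ Aq, convPow μ (m + k) ((z⁻¹ * y) * g) := by
                apply finsum_mem_mono
                · intro a ha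
                  rw [Finset.mem_coe, Set.Finite.mem_toFinset] at ha
                  exact ha.1
                · intro g; exact convPow_nonneg hfin hpos _ _
                · exact (convPow_shift_support_finite hfin (m+k) (z⁻¹*y)).subset
                    Set.inter_subset_right
            _ ≤ C * Real.exp (-c' * m) := ih (z⁻¹ * y)
        calc (∑ z ∈ S, ∑ g ∈ hNfin.toFinset, μ z * convPow μ (m + k) ((z⁻¹ * y) * g))
            ≤ ∑ z ∈ S, μ z * (C * Real.exp (-c' * m)) := Finset.sum_le_sum hinner
          _ = (∑ z ∈ S, μ z) * (C * Real.exp (-c' * m)) := by rw [Finset.sum_mul]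
          _ = 1 * (C * Real.exp (-c' * m)) := by rw [← finsum_eq_sum μ hfin, hsum]
          _ = C * Real.exp (-c' * m) := one_mul _
    obtain ⟨k, hk⟩ := Nat.exists_eq_add_of_le hmn
    have hmain : (∑ᶠ g ∈ Aq, convPow μ n g) ≤ C * Real.exp (-c' * m) := by
      have h8 := hclaim k 1
      rw [finsum_mem_congr rfl (fun g _ => by rw [one_mul])] at h8
      rw [hk]
      exact h8
    rw [hAq] at hmain
    refine le_trans hmain ?_
    have hmlow : x - 1 < m := by
      have h9 := Nat.lt_floor_add_one x
      rw [← hmdef] at h9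
      push_cast at h9 ⊢
      linarith [h9]
    have hev : c' * x = c * Real.log q := by
      rw [hc, hx]
      field_simp
    calc C * Real.exp (-c' * m)
        ≤ C * Real.exp (c' - c' * x) := by
          apply mul_le_mul_of_nonneg_left _ hC.le
          apply Real.exp_le_exp.2
          nlinarith
      _ = C * Real.exp c' * Real.exp (-(c * Real.log q)) := by
          rw [sub_eq_add_neg, Real.exp_add, hev]
          ring
      _ = C * Real.exp c' * (q:ℝ) ^ (-c) := by rw [hrpow]
      _ ≤ C' * (q:ℝ) ^ (-c) := by
          apply mul_le_mul_of_nonneg_right _ hrpow0.le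
          rw [hC']
          have h2lam : 0 < 1/(2*lam) := by positivity
          nlinarith [Real.exp_pos c', h2lam]
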